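/- arXiv:1308.4983 — 3 statements merged into one kernel-verified Lean document; each statement's English description precedes it below -/
import Mathlib

section
/- Let I be the radical ideal of a finite set of points Z in P^n (over an algebraically closed field of characteristic zero). Then for every k ≥ 1, the k-th symbolic power I^{(k)} equals the k-th differential power I^{<k>} = ⋂_{P ∈ Z} m_P^k, where m_P is the maximal homogeneous ideal of the point P. -/
open MvPolynomial

noncomputable section

/-- Apply a list of partial derivatives to a polynomial. -/
def derivList {n : ℕ} (L : List (Fin (n + 1))) (f : MvPolynomial (Fin (n + 1)) ℂ) :
    MvPolynomial (Fin (n + 1)) ℂ :=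
  L.foldr (fun i g => MvPolynomial.pderiv i g) f

/-- `f` vanishes to order at least `k` at the point with homogeneous coordinates `p`:
all partial derivatives of total order `< k` vanish at `p`. -/
def VanishTo {n : ℕ} (f : MvPolynomial (Fin (n + 1)) ℂ) (p : Fin (n + 1) → ℂ) (k : ℕ) : Prop :=
  ∀ L : List (Fin (n + 1)), L.length < k → MvPolynomial.eval p (derivList L f) = 0

/-- The `k`-th differential power of the ideal of `Z`: all polynomials vanishing to order
at least `k` at every point of `Z`. -/
def DiffPow {n : ℕ} (Z : Set (Fin (n + 1) → ℂ)) (k : ℕ) : Set (MvPolynomial (Fin (n + 1)) ℂ) :=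
  {f | ∀ p ∈ Z, VanishTo f p k}

/-- Initial degree: least degree of a nonzero homogeneous element of `S`. -/
def alphaSet {n : ℕ} (S : Set (MvPolynomial (Fin (n + 1)) ℂ)) : ℕ :=
  sInf {d | ∃ f ∈ S, f ≠ 0 ∧ MvPolynomial.IsHomogeneous f d}

/-- `α(I^{(k)})` for `I` the radical ideal of the point set `Z` (symbolic powers of such
ideals coincide with differential powers by Nagata–Zariski). -/
def alphaZ {n : ℕ} (Z : Set (Fin (n + 1) → ℂ)) (k : ℕ) : ℕ :=
  alphaSet (DiffPow Z k)

/-- Two homogeneous coordinate vectors define the same projective point. -/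
def ProjEq {n : ℕ} (p q : Fin (n + 1) → ℂ) : Prop :=
  ∃ t : ℂ, t ≠ 0 ∧ q = t • p

/-- The hyperplanes with covectors `a i` are in general position: every at most `n + 1`
of the covectors are linearly independent (equivalently, any `n` of the hyperplanes meet
in exactly one point and no `n + 1` of them have a common point). -/
def GenPos {n d : ℕ} (a : Fin d → (Fin (n + 1) → ℂ)) : Prop :=
  ∀ S : Finset (Fin d), S.card ≤ n + 1 →
    LinearIndependent ℂ (fun i : {x : Fin d // x ∈ S} => a i.1)

/-- The linear form with covector `a`. -/
def linForm {n : ℕ} (a : Fin (n + 1) → ℂ) : MvPolynomial (Fin (n + 1)) ℂ :=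
  ∑ i, MvPolynomial.C (a i) * MvPolynomial.X i

/-- The homogeneous vanishing ideal of the projective point with homogeneous
coordinates `p` (the "maximal homogeneous ideal" `m_P`): all polynomials vanishing on the
line through `p`. -/
def homIdealOfPoint {n : ℕ} (p : Fin (n + 1) → ℂ) : Ideal (MvPolynomial (Fin (n + 1)) ℂ) where
  carrier := {f | ∀ t : ℂ, MvPolynomial.eval (t • p) f = 0}
  zero_mem' := by intro t; simp
  add_mem' := by intro f g hf hg t; simp [hf t, hg t]
  smul_mem' := by intro c f hf t; simp [smul_eq_mul, hf t]

/-- The `k`-th symbolic power `I^{(k)} = R ∩ ⋂_{p ∈ Ass(I)} I^k R_p`. -/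
def symbolicPower {A : Type*} [CommRing A] (I : Ideal A) (k : ℕ) : Ideal A :=
  ⨅ P : {P : Ideal A // P ∈ I.minimalPrimes},
    haveI : P.1.IsPrime := P.2.1.1
    Ideal.comap (algebraMap A (Localization P.1.primeCompl))
      (Ideal.map (algebraMap A (Localization P.1.primeCompl)) (I ^ k))

/-! The minimal primes of `I = ⋂_{P ∈ Z} m_P` are the ideals `m_P`, and in the localization at
`m_P` every other `m_Q` becomes the unit ideal, so the `m_P`-component of `I^{(k)}` is the
saturation of `m_P^k`. That saturation is `m_P^k` itself because `m_P^k` is primary: after a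
linear change of coordinates moving `P` to `[1 : 0 : ⋯ : 0]`, `m_P^k` is the `k`-th power of the
ideal of the variables `X₁, …, Xₙ` over `ℂ[X₀]`, i.e. the polynomials of order at least `k` in
these variables, and order is additive over a domain. -/

theorem LinearEquiv.exists_apply_eq {K V : Type*} [DivisionRing K] [AddCommGroup V] [Module K V]
    {v w : V} (hv : v ≠ 0) (hw : w ≠ 0) : ∃ g : V ≃ₗ[K] V, g v = w := by
  obtain ⟨g, hg⟩ := Submodule.exists_linearEquiv_restrict_eq
    ((LinearEquiv.toSpanNonzeroSingleton K V v hv).symm.trans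
      (LinearEquiv.toSpanNonzeroSingleton K V w hw))
  have := hg (LinearEquiv.toSpanNonzeroSingleton K V v hv 1)
  rw [LinearEquiv.trans_apply, LinearEquiv.symm_apply_apply,
    LinearEquiv.toSpanNonzeroSingleton_one, LinearEquiv.toSpanNonzeroSingleton_one] at this
  exact ⟨g, this.symm⟩

theorem Ideal.IsPrime.biInf_le_iff {R ι : Type*} [CommRing R] {P : Ideal R} (hP : P.IsPrime)
    {f : ι → Ideal R} {Z : Set ι} (hZ : Z.Finite) :
    ⨅ i ∈ Z, f i ≤ P ↔ ∃ i ∈ Z, f i ≤ P := by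
  simpa [Finset.inf_eq_iInf] using hP.inf_le' (s := hZ.toFinset) (f := f)

namespace MvPolynomial

section idealOfVars

variable {σ R : Type*} [CommRing R]

theorem mem_idealOfVars_iff {f : MvPolynomial σ R} :
    f ∈ idealOfVars σ R ↔ constantCoeff f = 0 := by
  rw [← pow_one (idealOfVars σ R), mem_pow_idealOfVars_iff']
  simp [Finsupp.degree_eq_zero_iff, constantCoeff_eq]

theorem mem_pow_idealOfVars_iff_le_order (k : ℕ) (f : MvPolynomial σ R) :
    f ∈ idealOfVars σ R ^ k ↔ (k : ℕ∞) ≤ (f : MvPowerSeries σ R).order := by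
  rw [mem_pow_idealOfVars_iff']
  refine ⟨fun h => MvPowerSeries.nat_le_order fun d hd => by simpa using h d hd,
    fun h d hd => by
      simpa using MvPowerSeries.coeff_of_lt_order (lt_of_lt_of_le (by exact_mod_cast hd) h)⟩

theorem isPrimary_pow_idealOfVars [IsDomain R] {k : ℕ} (hk : k ≠ 0) :
    (idealOfVars σ R ^ k).IsPrimary := by
  refine Ideal.isPrimary_iff.mpr ⟨fun h => ?_, fun {x y} hxy => ?_⟩
  · have := Ideal.pow_le_self hk ((Ideal.eq_top_iff_one _).mp h)
    simp [mem_idealOfVars_iff] at this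
  by_cases hy : y ∈ idealOfVars σ R
  · exact Or.inr ⟨k, Ideal.pow_mem_pow hy k⟩
  -- `y` has order `0`, and orders of power series over a domain add up
  rw [← pow_one (idealOfVars σ R), mem_pow_idealOfVars_iff_le_order, not_le,
    Nat.cast_one, Order.lt_one_iff] at hy
  rw [mem_pow_idealOfVars_iff_le_order, coe_mul, MvPowerSeries.order_mul, hy, add_zero] at hxy
  exact Or.inl ((mem_pow_idealOfVars_iff_le_order k x).mpr hxy)

end idealOfVars

section linearSubst

variable {σ K : Type*} [Fintype σ] [DecidableEq σ] [CommRing K]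

noncomputable def linearSubst (T : (σ → K) →ₗ[K] σ → K) :
    MvPolynomial σ K →ₐ[K] MvPolynomial σ K :=
  aeval (LinearMap.toMatrix' T).toMvPolynomial

theorem eval_linearSubst (T : (σ → K) →ₗ[K] σ → K) (q : σ → K) (f : MvPolynomial σ K) :
    eval q (linearSubst T f) = eval (T q) f := by
  rw [linearSubst, ← coe_aeval_eq_eval, RingHom.coe_coe, ← AlgHom.comp_apply, comp_aeval]
  simp [Matrix.toMvPolynomial_eval_eq_apply]

variable [IsDomain K] [Infinite K]

noncomputable def linearSubstEquiv (T : (σ → K) ≃ₗ[K] σ → K) :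
    MvPolynomial σ K ≃ₐ[K] MvPolynomial σ K :=
  AlgEquiv.ofAlgHom (linearSubst T) (linearSubst T.symm)
    (AlgHom.ext fun f => funext fun q => by simp [eval_linearSubst])
    (AlgHom.ext fun f => funext fun q => by simp [eval_linearSubst])

theorem eval_linearSubstEquiv (T : (σ → K) ≃ₗ[K] σ → K) (q : σ → K) (f : MvPolynomial σ K) :
    eval q (linearSubstEquiv T f) = eval (T q) f :=
  eval_linearSubst _ q f

end linearSubst

section restrictToLine

variable {σ R : Type*} [CommSemiring R]

noncomputable def restrictToLine (p : σ → R) : MvPolynomial σ R →ₐ[R] Polynomial R :=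
  aeval fun i => Polynomial.C (p i) * Polynomial.X

theorem eval_restrictToLine (p : σ → R) (f : MvPolynomial σ R) (t : R) :
    (restrictToLine p f).eval t = eval (t • p) f := by
  rw [restrictToLine, ← Polynomial.coe_aeval_eq_eval, ← AlgHom.comp_apply, comp_aeval,
    ← coe_aeval_eq_eval, RingHom.coe_coe]
  congr
  funext i
  simp only [Polynomial.aeval_mul, Polynomial.aeval_C, Polynomial.aeval_X, Pi.smul_apply,
    smul_eq_mul, Algebra.algebraMap_self, RingHom.id_apply, mul_comm]

end restrictToLine

theorem constantCoeff_optionEquivRight_rename_finSuccEquiv {R : Type*} [CommRing R] {n : ℕ}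
    (f : MvPolynomial (Fin (n + 1)) R) :
    constantCoeff (optionEquivRight R (Fin n) (rename (_root_.finSuccEquiv n) f)) =
      restrictToLine (Pi.single 0 1) f := by
  induction f using MvPolynomial.induction_on with
  | C a => simp [restrictToLine]
  | add f g hf hg => simp only [map_add, hf, hg]
  | mul_X f i hf =>
    simp only [map_mul, hf, rename_X]
    congr 1
    cases i using Fin.cases <;> simp [restrictToLine]

/-- Straightening the line through `p` to the `X 0`-axis and then treating `X 0` as a
coefficient turns restriction to that line into taking the constant coefficient. -/
theorem exists_algEquiv_constantCoeff_eq_restrictToLine {K : Type*} [Field K] [Infinite K]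
    {n : ℕ} {p : Fin (n + 1) → K} (hp : p ≠ 0) :
    ∃ E : MvPolynomial (Fin (n + 1)) K ≃ₐ[K] MvPolynomial (Fin n) (Polynomial K),
      ∀ f, constantCoeff (E f) = restrictToLine p f := by
  obtain ⟨T, hT⟩ := LinearEquiv.exists_apply_eq (K := K)
    (Pi.single_ne_zero_iff.mpr one_ne_zero : Pi.single (0 : Fin (n + 1)) (1 : K) ≠ 0) hp
  refine ⟨((linearSubstEquiv T).trans (renameEquiv K (_root_.finSuccEquiv n))).trans
    (optionEquivRight K (Fin n)), fun f => Polynomial.funext fun t => ?_⟩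
  simp only [AlgEquiv.trans_apply, renameEquiv_apply,
    constantCoeff_optionEquivRight_rename_finSuccEquiv, eval_restrictToLine,
    eval_linearSubstEquiv, map_smul, hT]

end MvPolynomial

theorem IsLocalization.map_eq_map_of_mul_mem {R S : Type*} [CommRing R] [CommRing S] [Algebra R S]
    (M : Submonoid R) [IsLocalization M S] {I J : Ideal R} (hIJ : I ≤ J) {s : R} (hs : s ∈ M)
    (hJ : ∀ f ∈ J, s * f ∈ I) : I.map (algebraMap R S) = J.map (algebraMap R S) :=
  le_antisymm (Ideal.map_mono hIJ) <| Ideal.map_le_iff_le_comap.mpr fun f hf =>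
    (IsLocalization.algebraMap_mem_map_algebraMap_iff M S I f).mpr ⟨s, hs, hJ f hf⟩

section homIdealOfPoint

variable {n : ℕ}

theorem homIdealOfPoint_eq_ker (p : Fin (n + 1) → ℂ) :
    homIdealOfPoint p = RingHom.ker (restrictToLine p) := by
  ext f
  rw [RingHom.mem_ker]
  refine ⟨fun h => Polynomial.funext fun t => ?_, fun h t => ?_⟩
  · rw [eval_restrictToLine, Polynomial.eval_zero]
    exact h t
  · rw [← eval_restrictToLine, h, Polynomial.eval_zero]

instance (p : Fin (n + 1) → ℂ) : (homIdealOfPoint p).IsPrime := by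
  rw [homIdealOfPoint_eq_ker]
  exact RingHom.ker_isPrime _

theorem isPrimary_homIdealOfPoint_pow {p : Fin (n + 1) → ℂ} (hp : p ≠ 0) {k : ℕ} (hk : k ≠ 0) :
    (homIdealOfPoint p ^ k).IsPrimary := by
  obtain ⟨E, hE⟩ := exists_algEquiv_constantCoeff_eq_restrictToLine hp
  have : homIdealOfPoint p = (idealOfVars (Fin n) (Polynomial ℂ)).comap E.toRingEquiv := by
    ext f
    simp [homIdealOfPoint_eq_ker, mem_idealOfVars_iff, hE]
  rw [this, ← Ideal.map_symm, ← Ideal.map_pow, Ideal.map_symm]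
  exact (isPrimary_pow_idealOfVars hk).comap E.toRingEquiv.toRingHom

theorem homIdealOfPoint_smul {p : Fin (n + 1) → ℂ} {c : ℂ} (hc : c ≠ 0) :
    homIdealOfPoint (c • p) = homIdealOfPoint p := by
  ext f
  refine ⟨fun h t => ?_, fun h t => by simpa [smul_smul] using h (t * c)⟩
  simpa [smul_smul, hc] using h (t * c⁻¹)

theorem mem_span_singleton_of_homIdealOfPoint_le {p q : Fin (n + 1) → ℂ}
    (h : homIdealOfPoint q ≤ homIdealOfPoint p) : p ∈ Submodule.span ℂ {q} := by
  by_contra hpq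
  obtain ⟨φ, hφp, hφq⟩ := Submodule.exists_dual_map_eq_bot_of_notMem hpq inferInstance
  set g := linForm fun i => φ fun j => if i = j then 1 else 0
  have hg : ∀ x, eval x g = φ x := fun x => by
    simp [g, linForm, φ.pi_apply_eq_sum_univ x, mul_comm]
  have hφq : φ q = 0 :=
    (Submodule.mem_bot ℂ).mp (hφq ▸ Submodule.mem_map_of_mem (Submodule.mem_span_singleton_self q))
  apply hφp
  simpa [hg] using h (show g ∈ homIdealOfPoint q from fun t => by simp [hg, hφq]) 1

theorem homIdealOfPoint_eq_of_le {p q : Fin (n + 1) → ℂ} (hp : p ≠ 0)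
    (h : homIdealOfPoint q ≤ homIdealOfPoint p) : homIdealOfPoint q = homIdealOfPoint p := by
  obtain ⟨c, rfl⟩ := Submodule.mem_span_singleton.mp (mem_span_singleton_of_homIdealOfPoint_le h)
  exact (homIdealOfPoint_smul (left_ne_zero_of_smul hp)).symm

variable {Z : Set (Fin (n + 1) → ℂ)}

theorem minimalPrimes_iInf_homIdealOfPoint (hZ : Z.Finite) (h0 : ∀ p ∈ Z, p ≠ 0) :
    (⨅ p ∈ Z, homIdealOfPoint p).minimalPrimes = homIdealOfPoint '' Z := by
  ext P
  constructor
  · rintro ⟨⟨hP, hle⟩, hmin⟩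
    obtain ⟨p, hp, hpP⟩ := (hP.biInf_le_iff hZ).mp hle
    exact ⟨p, hp, le_antisymm hpP (hmin ⟨inferInstance, iInf₂_le p hp⟩ hpP)⟩
  · rintro ⟨p, hp, rfl⟩
    refine ⟨⟨inferInstance, iInf₂_le p hp⟩, fun Q ⟨hQ, hle⟩ hQp => ?_⟩
    obtain ⟨q, hq, hqQ⟩ := (hQ.biInf_le_iff hZ).mp hle
    exact homIdealOfPoint_eq_of_le (h0 p hp) (hqQ.trans hQp) ▸ hqQ

theorem map_iInf_homIdealOfPoint (hZ : Z.Finite) (h0 : ∀ p ∈ Z, p ≠ 0)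
    {p : Fin (n + 1) → ℂ} (hp : p ∈ Z) :
    (⨅ q ∈ Z, homIdealOfPoint q).map
        (algebraMap _ (Localization.AtPrime (homIdealOfPoint p))) =
      (homIdealOfPoint p).map (algebraMap _ (Localization.AtPrime (homIdealOfPoint p))) := by
  -- prime avoidance gives a function vanishing at all other points of `Z` but not at `p`
  obtain ⟨s, hs, hsp⟩ : ∃ s ∈ ⨅ q ∈ {q ∈ Z | homIdealOfPoint q ≠ homIdealOfPoint p},
      homIdealOfPoint q, s ∉ homIdealOfPoint p := by
    refine SetLike.not_le_iff_exists.mp fun hle => ?_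
    obtain ⟨q, ⟨hq, hqp⟩, hle⟩ := (Ideal.IsPrime.biInf_le_iff inferInstance (hZ.sep _)).mp hle
    exact hqp (homIdealOfPoint_eq_of_le (h0 p hp) hle)
  refine IsLocalization.map_eq_map_of_mul_mem (homIdealOfPoint p).primeCompl (iInf₂_le p hp) hsp
    fun f hf => ?_
  simp only [Ideal.mem_iInf] at hs ⊢
  intro q hq
  by_cases hqp : homIdealOfPoint q = homIdealOfPoint p
  · exact Ideal.mul_mem_left _ _ (hqp ▸ hf)
  · exact Ideal.mul_mem_right _ _ (hs q ⟨hq, hqp⟩)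

theorem comap_map_pow_iInf_homIdealOfPoint (hZ : Z.Finite) (h0 : ∀ p ∈ Z, p ≠ 0)
    {p : Fin (n + 1) → ℂ} (hp : p ∈ Z) {k : ℕ} (hk : k ≠ 0) :
    (((⨅ q ∈ Z, homIdealOfPoint q) ^ k).map
        (algebraMap _ (Localization.AtPrime (homIdealOfPoint p)))).comap
      (algebraMap _ (Localization.AtPrime (homIdealOfPoint p))) = homIdealOfPoint p ^ k := by
  rw [Ideal.map_pow, map_iInf_homIdealOfPoint hZ h0 hp, ← Ideal.map_pow]
  exact IsLocalization.under_map_of_isPrimary_disjoint (homIdealOfPoint p).primeCompl _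
    (isPrimary_homIdealOfPoint_pow (h0 p hp) hk)
    (Set.disjoint_left.mpr fun _ hx hx' => hx (Ideal.pow_le_self hk hx'))

end homIdealOfPoint

theorem symbolicPower_eq_differentialPower_general {n : ℕ} (Z : Set (Fin (n + 1) → ℂ))
    (hfin : Z.Finite) (h0 : ∀ p ∈ Z, p ≠ 0)
    (k : ℕ) (hk : 1 ≤ k) :
    symbolicPower (⨅ p ∈ Z, homIdealOfPoint p) k = ⨅ p ∈ Z, (homIdealOfPoint p) ^ k := by
  have hminimal := minimalPrimes_iInf_homIdealOfPoint hfin h0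
  have hlocal := fun p (hp : p ∈ Z) =>
    comap_map_pow_iInf_homIdealOfPoint hfin h0 hp (Nat.one_le_iff_ne_zero.mp hk)
  unfold symbolicPower
  refine le_antisymm (le_iInf₂ fun p hp => ?_) (le_iInf fun P => ?_)
  · exact iInf_le_of_le ⟨homIdealOfPoint p, hminimal ▸ ⟨p, hp, rfl⟩⟩ (hlocal p hp).le
  · obtain ⟨P, hP⟩ := P
    obtain ⟨p, hp, rfl⟩ := hminimal ▸ hP
    exact iInf₂_le_of_le p hp (hlocal p hp).ge

/-- Nagata–Zariski: for the radical ideal `I` of a finite set of points `Z`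
in `ℙ^n`, the `k`-th symbolic power equals the `k`-th differential power
`⋂_{P ∈ Z} m_P^k`. -/
theorem symbolicPower_eq_differentialPower {n : ℕ} (Z : Set (Fin (n + 1) → ℂ))
    (hfin : Z.Finite) (hne : Z.Nonempty) (h0 : ∀ p ∈ Z, p ≠ 0)
    (k : ℕ) (hk : 1 ≤ k) :
    symbolicPower (⨅ p ∈ Z, homIdealOfPoint p) k = ⨅ p ∈ Z, (homIdealOfPoint p) ^ k :=
  symbolicPower_eq_differentialPower_general Z hfin h0 k hk
end
end

section
/- Let f be a homogeneous polynomial of degree d in C[x_0,...,x_n] whose zero hypersurface has multiplicity exactly m at a point P, with 2 ≤ m < d. Then there exists a direction v ∈ C^{n+1} such that the directional derivative ∂_v f (a homogeneous polynomial of degree d−1) has multiplicity exactly m at P. -/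
open MvPolynomial

noncomputable section

/-!
Take `v = p`. The operator `∂_p = ∑ pᵢ ∂ᵢ` commutes with every partial derivative, and by
Euler's identity `(∂_p g)(p) = k · g(p)` for `g` homogeneous of degree `k`. Hence every partial
derivative of order `j` of `∂_p f` takes at `p` the value `(d - j)` times that of `f`, and for
`j ≤ m < d` this factor is nonzero, so `∂_p f` and `f` vanish to exactly the same order at `p`.
-/

namespace MvPolynomial

variable {R σ : Type*}

theorem pderiv_comm [CommRing R] (i j : σ) (f : MvPolynomial σ R) :
    pderiv i (pderiv j f) = pderiv j (pderiv i f) := by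
  classical
  have hX : ⁅pderiv i, pderiv j⁆ = (0 : Derivation R (MvPolynomial σ R) (MvPolynomial σ R)) :=
    derivation_ext fun k => by
      rw [Derivation.commutator_apply]
      simp [pderiv_X, Pi.single_apply, apply_ite]
  exact sub_eq_zero.mp (DFunLike.congr_fun hX f)

theorem IsHomogeneous.sum_mul_eval_pderiv [CommSemiring R] [Fintype σ] {φ : MvPolynomial σ R}
    {k : ℕ} (h : φ.IsHomogeneous k) (x : σ → R) :
    ∑ i, x i * eval x (pderiv i φ) = k * eval x φ := by
  simpa [map_sum, nsmul_eq_mul] using congr(eval x $(h.sum_X_mul_pderiv))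

end MvPolynomial

section DerivList

variable {n : ℕ}

theorem derivList_cons (i : Fin (n + 1)) (L : List (Fin (n + 1)))
    (f : MvPolynomial (Fin (n + 1)) ℂ) :
    derivList (i :: L) f = pderiv i (derivList L f) :=
  rfl

theorem derivList_pderiv (L : List (Fin (n + 1))) (i : Fin (n + 1))
    (f : MvPolynomial (Fin (n + 1)) ℂ) :
    derivList L (pderiv i f) = pderiv i (derivList L f) := by
  induction L with
  | nil => rfl
  | cons j L ih => rw [derivList_cons, derivList_cons, ih, pderiv_comm]

theorem derivList_sum_smul (L : List (Fin (n + 1))) (v : Fin (n + 1) → ℂ)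
    (g : Fin (n + 1) → MvPolynomial (Fin (n + 1)) ℂ) :
    derivList L (∑ i, v i • g i) = ∑ i, v i • derivList L (g i) := by
  induction L with
  | nil => rfl
  | cons j L ih => simp only [derivList_cons, ih, map_sum, Derivation.map_smul]

theorem MvPolynomial.IsHomogeneous.derivList {f : MvPolynomial (Fin (n + 1)) ℂ} {d : ℕ}
    (hf : f.IsHomogeneous d) (L : List (Fin (n + 1))) :
    (derivList L f).IsHomogeneous (d - L.length) := by
  induction L with
  | nil => exact hf
  | cons i L ih =>
    rw [derivList_cons, List.length_cons, ← Nat.sub_sub]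
    exact ih.pderiv

theorem eval_derivList_sum_smul_pderiv_self {f : MvPolynomial (Fin (n + 1)) ℂ} {d : ℕ}
    (hf : f.IsHomogeneous d) (p : Fin (n + 1) → ℂ) (L : List (Fin (n + 1))) :
    eval p (derivList L (∑ i, p i • pderiv i f)) =
      ((d - L.length : ℕ) : ℂ) * eval p (derivList L f) := by
  simp only [derivList_sum_smul, derivList_pderiv, map_sum, smul_eval]
  exact (hf.derivList L).sum_mul_eval_pderiv p

theorem vanishTo_sum_smul_pderiv_self_iff {f : MvPolynomial (Fin (n + 1)) ℂ} {d k : ℕ}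
    (hf : f.IsHomogeneous d) (p : Fin (n + 1) → ℂ) (hk : k ≤ d) :
    VanishTo (∑ i, p i • pderiv i f) p k ↔ VanishTo f p k := by
  refine forall₂_congr fun L hL => ?_
  rw [eval_derivList_sum_smul_pderiv_self hf, mul_eq_zero_iff_left]
  exact Nat.cast_ne_zero.mpr (by omega)

end DerivList

theorem exists_directional_derivative_same_multiplicity_general {n : ℕ}
    (f : MvPolynomial (Fin (n + 1)) ℂ) (d : ℕ) (hf : MvPolynomial.IsHomogeneous f d)
    (p : Fin (n + 1) → ℂ) (m : ℕ) (hmd : m < d)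
    (hmult : VanishTo f p m ∧ ¬ VanishTo f p (m + 1)) :
    ∃ v : Fin (n + 1) → ℂ,
      VanishTo (∑ i, v i • MvPolynomial.pderiv i f) p m ∧
      ¬ VanishTo (∑ i, v i • MvPolynomial.pderiv i f) p (m + 1) :=
  ⟨p, (vanishTo_sum_smul_pderiv_self_iff hf p hmd.le).2 hmult.1,
    (vanishTo_sum_smul_pderiv_self_iff hf p hmd).not.2 hmult.2⟩

/-- if a hypersurface `{f = 0}` of degree `d` has multiplicity exactly `m`
at a point `P`, with `2 ≤ m < d`, then some directional derivative `∂_v f` has multiplicity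
exactly `m` at `P`. -/
theorem exists_directional_derivative_same_multiplicity {n : ℕ}
    (f : MvPolynomial (Fin (n + 1)) ℂ) (d : ℕ) (hf : MvPolynomial.IsHomogeneous f d)
    (p : Fin (n + 1) → ℂ) (hp : p ≠ 0) (m : ℕ) (hm2 : 2 ≤ m) (hmd : m < d)
    (hmult : VanishTo f p m ∧ ¬ VanishTo f p (m + 1)) :
    ∃ v : Fin (n + 1) → ℂ,
      VanishTo (∑ i, v i • MvPolynomial.pderiv i f) p m ∧
      ¬ VanishTo (∑ i, v i • MvPolynomial.pderiv i f) p (m + 1) :=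
  exists_directional_derivative_same_multiplicity_general f d hf p m hmd hmult
end
end

section
/- Let H_1, ..., H_d be d ≥ 3 lines in P^2 in general position (no three concurrent), and let Z be the set of the binomial(d,2) intersection points H_i ∩ H_j (i < j). If F is a plane curve of degree d with multiplicity at least 2 at every point of Z, then F is the union H_1 ∪ ... ∪ H_d (as divisors, F = H_1 + ... + H_d). -/
/-!
Restrict `F` to one of the lines `H_i`. The other `d - 1` lines meet `H_i` in `d - 1` distinct
points (no three lines are concurrent), and `F` vanishes to order two at each of them, so the
restriction, a polynomial of degree at most `d` in a parameter of the line, has at least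
`2 (d - 1) > d` roots counted with multiplicity and is identically zero. By the Nullstellensatz
the linear form of `H_i` then divides `F`. These linear forms are pairwise non-associated primes,
so their product, of degree `d`, divides `F`, and comparing degrees leaves a constant factor.
-/

open MvPolynomial

noncomputable section

lemma exists_eq_C_mul_of_dvd {σ R : Type*} [CommRing R] [IsDomain R]
    {P F : MvPolynomial σ R} (hPF : P ∣ F) (hF : F ≠ 0) (hdeg : F.totalDegree ≤ P.totalDegree) :
    ∃ c, c ≠ 0 ∧ F = C c * P := by
  obtain ⟨g, rfl⟩ := hPF
  have hg : g ≠ 0 := right_ne_zero_of_mul hF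
  rw [totalDegree_mul_of_isDomain (left_ne_zero_of_mul hF) hg] at hdeg
  obtain ⟨c, rfl⟩ : ∃ c, g = C c := ⟨_, totalDegree_eq_zero_iff_eq_C.mp (by omega)⟩
  exact ⟨c, by simpa using hg, mul_comm _ _⟩

section LinearForms

variable {n : ℕ}

lemma eval_linForm (a x : Fin (n + 1) → ℂ) : eval x (linForm a) = a ⬝ᵥ x := by
  simp [linForm, dotProduct]

lemma coeff_single_linForm (a : Fin (n + 1) → ℂ) (s : Fin (n + 1)) :
    coeff (Finsupp.single s 1) (linForm a) = a s := by
  simp [linForm, coeff_sum, coeff_C_mul, coeff_X, Finsupp.single_eq_single_iff]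

lemma linForm_injective : Function.Injective (linForm (n := n)) := fun a b h =>
  funext fun s => by rw [← coeff_single_linForm a, h, coeff_single_linForm]

lemma linForm_smul (c : ℂ) (a : Fin (n + 1) → ℂ) : linForm (c • a) = C c * linForm a := by
  simp [linForm, Finset.mul_sum, mul_assoc]

lemma linForm_ne_zero {a : Fin (n + 1) → ℂ} (ha : a ≠ 0) : linForm a ≠ 0 :=
  fun h => ha (linForm_injective (h.trans (by simp [linForm])))

lemma isHomogeneous_linForm (a : Fin (n + 1) → ℂ) : (linForm a).IsHomogeneous 1 :=
  IsHomogeneous.sum _ _ _ fun i _ => (isHomogeneous_X ℂ i).C_mul (a i)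

lemma totalDegree_linForm {a : Fin (n + 1) → ℂ} (ha : a ≠ 0) : (linForm a).totalDegree = 1 :=
  (isHomogeneous_linForm a).totalDegree (linForm_ne_zero ha)

lemma irreducible_linForm {a : Fin (n + 1) → ℂ} (ha : a ≠ 0) : Irreducible (linForm a) := by
  refine irreducible_of_totalDegree_eq_one (totalDegree_linForm ha) fun c hc => ?_
  obtain ⟨s, hs⟩ := Function.ne_iff.mp ha
  refine Ne.isUnit ?_
  rintro rfl
  exact hs (by simpa [coeff_single_linForm] using hc (Finsupp.single s 1))

lemma linForm_dvd_of_forall_eval_eq_zero {a : Fin (n + 1) → ℂ} (ha : a ≠ 0)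
    {F : MvPolynomial (Fin (n + 1)) ℂ} (hF : ∀ x, a ⬝ᵥ x = 0 → eval x F = 0) :
    linForm a ∣ F := by
  have : (Ideal.span {linForm a}).IsPrime :=
    (Ideal.span_singleton_prime (linForm_ne_zero ha)).mpr (irreducible_linForm ha).prime
  rw [← Ideal.mem_span_singleton,
    ← IsPrime.vanishingIdeal_zeroLocus (K := ℂ) (Ideal.span {linForm a}), mem_vanishingIdeal_iff]
  intro x hx
  simpa [eval_linForm] using
    hF x (by simpa [eval_linForm] using hx _ (Ideal.mem_span_singleton_self _))

lemma not_linForm_dvd_linForm {a b : Fin (n + 1) → ℂ} (hab : LinearIndependent ℂ ![a, b]) :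
    ¬ linForm a ∣ linForm b := by
  have ha : a ≠ 0 := by simpa using hab.ne_zero 0
  have hb : b ≠ 0 := by simpa using hab.ne_zero 1
  intro hdvd
  obtain ⟨c, -, hc⟩ := exists_eq_C_mul_of_dvd hdvd (linForm_ne_zero hb)
    (by rw [totalDegree_linForm ha, totalDegree_linForm hb])
  rw [← linForm_smul] at hc
  have := (LinearIndependent.pair_iff.mp hab c (-1) (by simp [linForm_injective hc]))
  simp at this

end LinearForms

lemma exists_dotProduct_ne_zero {K ι : Type*} [Field K] [Infinite K] [Fintype ι]
    {s : Finset (ι → K)} (hs : 0 ∉ s) : ∃ w, ∀ c ∈ s, c ⬝ᵥ w ≠ 0 := by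
  classical
  have hproper :
      (⊤ : Subspace K (ι → K)) ∉ s.image fun c => LinearMap.ker (dotProductEquiv K ι c) := by
    simp only [Finset.mem_image, not_exists, not_and]
    intro c hc hker
    have : c = 0 := dotProduct_eq_zero c fun w => by
      simpa using hker.ge (Submodule.mem_top (x := w))
    exact hs (this ▸ hc)
  obtain ⟨w, hw⟩ := (Set.ne_univ_iff_exists_notMem _).mp
    (Subspace.biUnion_ne_univ_of_top_notMem hproper)
  refine ⟨w, fun c hc hcw => hw ?_⟩
  exact Set.mem_iUnion₂.mpr ⟨_, Finset.mem_image_of_mem _ hc, by simpa using hcw⟩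

lemma two_mul_card_le_natDegree {K : Type*} [Field K] {g : Polynomial K}
    {T : Finset K} (hT : ∀ t ∈ T, 1 < g.rootMultiplicity t) : 2 * T.card ≤ g.natDegree := by
  classical
  have hle : 2 • T.val ≤ g.roots := Multiset.le_iff_count.mpr fun t => by
    rw [Multiset.count_nsmul, Polynomial.count_roots, Multiset.count_eq_of_nodup T.nodup]
    split_ifs with ht
    · exact hT t ht
    · simp
  simpa using (Multiset.card_le_card hle).trans (Polynomial.card_roots' g)

section LineRestrict

variable {σ R : Type*} [CommRing R]

def lineRestrict (p q : σ → R) : MvPolynomial σ R →ₐ[R] Polynomial R :=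
  aeval fun s => Polynomial.C (q s) * Polynomial.X + Polynomial.C (p s)

lemma eval_lineRestrict (p q : σ → R) (F : MvPolynomial σ R) (t : R) :
    (lineRestrict p q F).eval t = eval (p + t • q) F := by
  rw [lineRestrict, ← Polynomial.coe_aeval_eq_eval, ← AlgHom.comp_apply, comp_aeval]
  exact congrArg (eval · F) (funext fun s => by simp; ring)

lemma natDegree_lineRestrict_le (p q : σ → R) (F : MvPolynomial σ R) :
    (lineRestrict p q F).natDegree ≤ F.totalDegree := by
  simpa [lineRestrict] using aeval_natDegree_le F le_rfl _ fun s => Polynomial.natDegree_linear_le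

lemma derivative_lineRestrict [Fintype σ] (p q : σ → R) (F : MvPolynomial σ R) :
    Polynomial.derivative (lineRestrict p q F)
      = ∑ s, Polynomial.C (q s) * lineRestrict p q (pderiv s F) := by
  induction F using MvPolynomial.induction_on with
  | C c => simp [lineRestrict]
  | add f g hf hg => simp only [map_add, hf, hg, mul_add, Finset.sum_add_distrib]
  | mul_X f s hf =>
    classical
    have hXs : lineRestrict p q (X s) = Polynomial.C (q s) * Polynomial.X + Polynomial.C (p s) :=
      aeval_X _ s
    have hterm : ∀ u, Polynomial.C (q u) * lineRestrict p q (pderiv u (f * X s))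
        = (if s = u then Polynomial.C (q s) * lineRestrict p q f else 0)
          + (Polynomial.C (q s) * Polynomial.X + Polynomial.C (p s))
            * (Polynomial.C (q u) * lineRestrict p q (pderiv u f)) := by
      intro u
      by_cases hsu : s = u
      · subst hsu; simp [Derivation.leibniz, hXs]; ring
      · simp [Derivation.leibniz, pderiv_X, hsu, hXs]; ring
    rw [Finset.sum_congr rfl fun u _ => hterm u, Finset.sum_add_distrib, Finset.sum_ite_eq,
      ← Finset.mul_sum, ← hf, map_mul, Polynomial.derivative_mul, hXs]
    simp
    ring

end LineRestrict

section VanishTo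

variable {n : ℕ}

lemma one_lt_rootMultiplicity_lineRestrict {F : MvPolynomial (Fin (n + 1)) ℂ}
    {p q : Fin (n + 1) → ℂ} {t : ℂ} (hF : VanishTo F (p + t • q) 2)
    (h0 : lineRestrict p q F ≠ 0) : 1 < (lineRestrict p q F).rootMultiplicity t := by
  refine (Polynomial.one_lt_rootMultiplicity_iff_isRoot h0).mpr ⟨?_, ?_⟩
  · simpa [eval_lineRestrict, derivList] using hF [] (by simp)
  · simp only [Polynomial.IsRoot, derivative_lineRestrict, Polynomial.eval_finsetSum,
      Polynomial.eval_mul, eval_lineRestrict]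
    exact Finset.sum_eq_zero fun s _ => mul_eq_zero_of_right _ (hF [s] (by simp))

lemma lineRestrict_eq_zero_of_vanishTo_two {F : MvPolynomial (Fin (n + 1)) ℂ}
    {p q : Fin (n + 1) → ℂ} {T : Finset ℂ} (hT : F.totalDegree < 2 * T.card)
    (hvan : ∀ t ∈ T, VanishTo F (p + t • q) 2) : lineRestrict p q F = 0 := by
  by_contra h0
  have := two_mul_card_le_natDegree fun t ht =>
    one_lt_rootMultiplicity_lineRestrict (hvan t ht) h0
  have := natDegree_lineRestrict_le p q F
  omega

end VanishTo

namespace GenPos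

section Space

variable {n d : ℕ} {a : Fin d → Fin (n + 1) → ℂ}

lemma ne_zero (hgen : GenPos a) (i : Fin d) : a i ≠ 0 :=
  (hgen {i} (by simp)).ne_zero ⟨i, Finset.mem_singleton_self i⟩

lemma linearIndependent_pair (hgen : GenPos a) (hn : 1 ≤ n) {i j : Fin d} (hij : i ≠ j) :
    LinearIndependent ℂ ![a i, a j] := by
  have hS : ({i, j} : Finset (Fin d)).card ≤ n + 1 := by
    rw [Finset.card_pair hij]; omega
  have hmem : ∀ k : Fin 2, ![i, j] k ∈ ({i, j} : Finset (Fin d)) := by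
    intro k; fin_cases k <;> simp
  convert (hgen _ hS).comp (fun k => ⟨_, hmem k⟩) fun k l hkl => ?_ using 1
  · ext k; fin_cases k <;> rfl
  · have := congrArg Subtype.val hkl
    fin_cases k <;> fin_cases l <;> simp_all [eq_comm]

lemma eq_zero_of_dotProduct_eq_zero (hgen : GenPos a) {S : Finset (Fin d)} (hS : S.card = n + 1)
    {z : Fin (n + 1) → ℂ} (hz : ∀ i ∈ S, a i ⬝ᵥ z = 0) : z = 0 := by
  classical
  have hspan := (hgen S hS.le).span_eq_top_of_card_eq_finrank' (by simp [hS])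
  have hle :
      Submodule.span ℂ (Set.range fun i : S => a i) ≤ LinearMap.ker (dotProductEquiv ℂ _ z) :=
    Submodule.span_le.mpr <| Set.range_subset_iff.mpr fun i => by
      simp [dotProduct_comm z, hz i i.2]
  rw [hspan] at hle
  exact dotProduct_eq_zero z fun w => by simpa using hle (Submodule.mem_top (x := w))

end Space

section Plane

open scoped Matrix

variable {d : ℕ} {a : Fin d → Fin 3 → ℂ}

lemma exists_direction_off_other_lines (hgen : GenPos a) (i : Fin d) {x : Fin 3 → ℂ}
    (hx0 : x ≠ 0) (hx : a i ⬝ᵥ x = 0) :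
    ∃ q, a i ⬝ᵥ q = 0 ∧ LinearIndependent ℂ ![x, q] ∧ ∀ j, j ≠ i → a j ⬝ᵥ q ≠ 0 := by
  classical
  -- `q := a i ⨯₃ w` lies on `H_i`; by the triple product identities it is off `H_j` iff
  -- `(a j ⨯₃ a i) ⬝ᵥ w ≠ 0`, and independent of `x` iff `x ⬝ᵥ w ≠ 0`.
  obtain ⟨w, hw⟩ := exists_dotProduct_ne_zero
    (s := insert x ((Finset.univ.erase i).image fun j => a j ⨯₃ a i)) <| by
      simp only [Finset.mem_insert, Finset.mem_image, Finset.mem_erase, Finset.mem_univ, and_true,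
        not_or, not_exists, not_and]
      exact ⟨hx0.symm, fun j hj => crossProduct_ne_zero_iff_linearIndependent.mpr
        (hgen.linearIndependent_pair (by norm_num) hj)⟩
  refine ⟨a i ⨯₃ w, dot_self_cross _ _, ?_, fun j hj => ?_⟩
  · rw [← crossProduct_ne_zero_iff_linearIndependent, cross_cross_eq_smul_sub_smul', hx,
      zero_smul, sub_zero]
    exact smul_ne_zero (hw x (Finset.mem_insert_self _ _)) (hgen.ne_zero i)
  · rw [triple_product_permutation, triple_product_permutation, dotProduct_comm]
    exact hw _ (Finset.mem_insert_of_mem (Finset.mem_image_of_mem _ (Finset.mem_erase.mpr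
      ⟨hj, Finset.mem_univ j⟩)))

lemma eval_eq_zero_of_vanishTo_two_at_star (hd : 3 ≤ d) (hgen : GenPos a)
    {F : MvPolynomial (Fin 3) ℂ} (hF : F.totalDegree ≤ d)
    (hmult : ∀ p : Fin 3 → ℂ, p ≠ 0 →
      (∃ i j : Fin d, i ≠ j ∧ a i ⬝ᵥ p = 0 ∧ a j ⬝ᵥ p = 0) → VanishTo F p 2)
    {i : Fin d} {x : Fin 3 → ℂ} (hx0 : x ≠ 0) (hx : a i ⬝ᵥ x = 0) : eval x F = 0 := by
  obtain ⟨q, hq, hxq, hqj⟩ := hgen.exists_direction_off_other_lines i hx0 hx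
  set t : Fin d → ℂ := fun j => -(a j ⬝ᵥ x) / (a j ⬝ᵥ q)
  have hi : ∀ s : ℂ, a i ⬝ᵥ (x + s • q) = 0 := fun s => by simp [hx, hq]
  have hmeet : ∀ j, j ≠ i → a j ⬝ᵥ (x + t j • q) = 0 := fun j hj => by
    simp only [dotProduct_add, dotProduct_smul, smul_eq_mul, t]
    field_simp [hqj j hj]
    ring
  have hne : ∀ s : ℂ, x + s • q ≠ 0 := fun s h => by
    simpa using (LinearIndependent.pair_iff.mp hxq 1 s (by simpa using h)).1
  have hinj : Set.InjOn t (Finset.univ.erase i) := by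
    intro j hj k hk htjk
    by_contra hjk
    have hj' : j ≠ i := Finset.ne_of_mem_erase hj
    have hk' : k ≠ i := Finset.ne_of_mem_erase hk
    refine hne (t j) (hgen.eq_zero_of_dotProduct_eq_zero
      (Finset.card_eq_three.mpr ⟨i, j, k, hj'.symm, hk'.symm, hjk, rfl⟩) ?_)
    simp only [Finset.mem_insert, Finset.mem_singleton]
    rintro l (rfl | rfl | rfl)
    exacts [hi _, hmeet l hj', htjk ▸ hmeet l hk']
  have hline := lineRestrict_eq_zero_of_vanishTo_two (F := F) (p := x) (q := q)
    (T := (Finset.univ.erase i).image t) (by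
      rw [Finset.card_image_of_injOn hinj, Finset.card_erase_of_mem (Finset.mem_univ i),
        Finset.card_univ, Fintype.card_fin]
      omega) (by
      simp only [Finset.mem_image, Finset.mem_erase, Finset.mem_univ, and_true]
      rintro _ ⟨j, hj, rfl⟩
      exact hmult _ (hne _) ⟨i, j, hj.symm, hi _, hmeet j hj⟩)
  simpa [eval_lineRestrict] using congrArg (Polynomial.eval 0) hline

end Plane

end GenPos

/-- if `F` is a plane curve of degree `d ≥ 3` with multiplicity at least `2`
at each of the pairwise intersection points of `d` lines in general position, then `F` is
the union of the `d` lines. -/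
theorem curve_through_star_is_union_of_lines (d : ℕ) (hd : 3 ≤ d)
    (a : Fin d → (Fin 3 → ℂ)) (hgen : GenPos a)
    (F : MvPolynomial (Fin 3) ℂ) (hF0 : F ≠ 0) (hFd : MvPolynomial.IsHomogeneous F d)
    (hmult : ∀ p : Fin 3 → ℂ, p ≠ 0 →
      (∃ i j : Fin d, i ≠ j ∧ (∑ s, a i s * p s) = 0 ∧ (∑ s, a j s * p s) = 0) →
      VanishTo F p 2) :
    ∃ c : ℂ, c ≠ 0 ∧ F = MvPolynomial.C c * ∏ i, linForm (a i) := by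
  have hdeg : F.totalDegree = d := hFd.totalDegree hF0
  have hline : ∀ i, linForm (a i) ∣ F := fun i =>
    linForm_dvd_of_forall_eval_eq_zero (hgen.ne_zero i) fun x hx => by
      rcases eq_or_ne x 0 with rfl | hx0
      · rw [eval_zero, constantCoeff_eq]
        exact hFd.coeff_eq_zero (by rw [map_zero]; omega)
      · exact hgen.eval_eq_zero_of_vanishTo_two_at_star hd hdeg.le hmult hx0 hx
  have hprod : (∏ i, linForm (a i)) ∣ F :=
    Fintype.prod_dvd_of_isRelPrime (fun i j hij =>
      (irreducible_linForm (hgen.ne_zero i)).isRelPrime_iff_not_dvd.mpr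
        (not_linForm_dvd_linForm (hgen.linearIndependent_pair (by norm_num) hij))) hline
  refine exists_eq_C_mul_of_dvd hprod hF0 ?_
  rw [hdeg, (IsHomogeneous.prod _ _ (fun _ => 1) fun i _ => isHomogeneous_linForm (a i)).totalDegree
    (Finset.prod_ne_zero_iff.mpr fun i _ => linForm_ne_zero (hgen.ne_zero i))]
  simp
end
end
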